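/- arXiv:1710.02042 — 4 statements merged into one kernel-verified Lean document; each statement's English description precedes it below -/
import Mathlib

section
/- Let G ≤ SL(2,ℝ) be a non-uniform lattice. Then for every real number α, L_G(α) = 2·height_G(γ(∞,α)), where γ(∞,α) is the vertical hyperbolic geodesic of ℍ with endpoints ∞ and α. -/
open scoped ENNReal
open MeasureTheory

noncomputable section

/-- `SL(2,ℝ)`. -/
abbrev SL2R := Matrix.SpecialLinearGroup (Fin 2) ℝ

/-- The entry in position (1,1) of a matrix in `SL(2,ℝ)`. -/
def entryA (g : SL2R) : ℝ := g.1 0 0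

/-- The entry in position (1,2) of a matrix in `SL(2,ℝ)`. -/
def entryB (g : SL2R) : ℝ := g.1 0 1

/-- The entry in position (2,1) of a matrix in `SL(2,ℝ)`. -/
def entryC (g : SL2R) : ℝ := g.1 1 0

/-- The entry in position (2,2) of a matrix in `SL(2,ℝ)`. -/
def entryD (g : SL2R) : ℝ := g.1 1 1

/-- The Möbius action of `g ∈ SL(2,ℝ)` on the complex plane (well defined on the
upper half-plane): `z ↦ (az+b)/(cz+d)`. -/
def moeb (g : SL2R) (z : ℂ) : ℂ :=
  ((entryA g : ℂ) * z + (entryB g : ℂ)) / ((entryC g : ℂ) * z + (entryD g : ℂ))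

/-- The upper half-plane `ℍ = {z : 0 < Im z}`, as a subset of `ℂ`. -/
def UHP : Set ℂ := {z : ℂ | 0 < z.im}

/-- Hyperbolic area of a subset of the upper half-plane: `∫∫ dx dy / y²`. -/
def hypArea (s : Set ℂ) : ℝ≥0∞ := ∫⁻ z in s, ENNReal.ofReal (1 / z.im ^ 2)

/-- A subgroup of `SL(2,ℝ)` is discrete if each of its elements is isolated
(in the topology of coefficientwise convergence). -/
def IsDiscreteSubgroup (G : Subgroup SL2R) : Prop :=
  ∀ g ∈ G, ∃ ε > (0 : ℝ), ∀ h ∈ G, (∀ i j, |h.1 i j - g.1 i j| < ε) → h = g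

/-- `F` is a (measurable) fundamental domain for the action of `G` on the upper
half-plane: the `G`-translates of `F` cover `ℍ`, and for every `g ∈ G` acting
nontrivially, `F` and `g·F` overlap in hyperbolic area zero. -/
def IsFundDom (G : Subgroup SL2R) (F : Set ℂ) : Prop :=
  F ⊆ UHP ∧ MeasurableSet F ∧
    (∀ z ∈ UHP, ∃ g ∈ G, moeb g z ∈ F) ∧
    (∀ g ∈ G, (∃ z ∈ UHP, moeb g z ≠ z) → hypArea (F ∩ (moeb g '' F)) = 0)

/-- `G ≤ SL(2,ℝ)` is a non-uniform lattice: it is discrete, it admits a fundamental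
domain of finite hyperbolic area, and the quotient `G\ℍ` is not compact (no compact
subset of `ℍ` meets every orbit). -/
def IsNonUniformLattice (G : Subgroup SL2R) : Prop :=
  IsDiscreteSubgroup G ∧
    (∃ F : Set ℂ, IsFundDom G F ∧ hypArea F < ⊤) ∧
    ¬ ∃ K : Set ℂ, IsCompact K ∧ K ⊆ UHP ∧ ∀ z ∈ UHP, ∃ g ∈ G, moeb g z ∈ K

/-- `∞` is a cusp of `G`: `G` contains a parabolic element `[[1,μ],[0,1]]` with `μ ≠ 0`. -/
def HasCuspAtInfty (G : Subgroup SL2R) : Prop :=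
  ∃ μ : ℝ, μ ≠ 0 ∧ ∃ p : SL2R, p.1 = !![1, μ; 0, 1] ∧ p ∈ G

/-- The set of `k > 0` such that there are infinitely many `g ∈ G`, with pairwise
distinct values `g·∞ = a(g)/c(g) ∈ ℝ`, with `|α − g·∞| < 1/(k c(g)²)`. -/
def LagrangeSet (G : Subgroup SL2R) (α : ℝ) : Set ℝ :=
  {k : ℝ | 0 < k ∧
    {v : ℝ | ∃ g ∈ G, entryC g ≠ 0 ∧ v = entryA g / entryC g ∧
      |α - v| < 1 / (k * entryC g ^ 2)}.Infinite}

/-- The Lagrange value `L_G(α) ∈ [0,∞]` (with the convention `sup ∅ = 0`). -/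
def LagrangeValue (G : Subgroup SL2R) (α : ℝ) : ℝ≥0∞ :=
  sSup (ENNReal.ofReal '' LagrangeSet G α)

/-- The Lagrange spectrum of `G` at `∞`. -/
def LagrangeSpectrum (G : Subgroup SL2R) : Set ℝ≥0∞ :=
  {L : ℝ≥0∞ | ∃ α : ℝ, LagrangeValue G α = L}

/-- The boundary `ℝ ∪ {∞}` of the upper half-plane, with `none` playing the role of `∞`,
and the Möbius action of `SL(2,ℝ)` on it. -/
def bdAct (g : SL2R) (p : Option ℝ) : Option ℝ :=
  match p with
  | none => if entryC g = 0 then none else some (entryA g / entryC g)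
  | some x =>
      if entryC g * x + entryD g = 0 then none
      else some ((entryA g * x + entryB g) / (entryC g * x + entryD g))

/-- The naive height of the hyperbolic geodesic `γ(x,y)` with endpoints `x, y` on the
boundary `ℝ ∪ {∞}`: it is `|x−y|/2` if both endpoints are real, and `+∞` otherwise. -/
def naiveHeight (x y : Option ℝ) : ℝ≥0∞ :=
  match x, y with
  | some u, some v => ENNReal.ofReal (|u - v| / 2)
  | _, _ => ⊤

/-- `g` and `h` are equivalent modulo infinity: `g = k h` for some `k ∈ G` fixing `∞`. -/
def EquivModInf (G : Subgroup SL2R) (g h : SL2R) : Prop :=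
  ∃ k ∈ G, entryC k = 0 ∧ g = k * h

/-- The set of `k > 0` such that `height(g(γ(x,y))) ≥ k` for infinitely many pairwise
inequivalent (modulo infinity) elements `g ∈ G`. -/
def essHeightSet (G : Subgroup SL2R) (x y : Option ℝ) : Set ℝ :=
  {k : ℝ | 0 < k ∧ ∃ S : Set SL2R, S.Infinite ∧
    (∀ g ∈ S, g ∈ G ∧ ENNReal.ofReal k ≤ naiveHeight (bdAct g x) (bdAct g y)) ∧
    S.Pairwise fun g h => ¬ EquivModInf G g h}

/-- The essential height `height_G(γ(x,y)) ∈ [0,∞]` of the geodesic with boundary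
endpoints `x, y ∈ ℝ ∪ {∞}` (with the convention `sup ∅ = 0`). -/
def essHeight (G : Subgroup SL2R) (x y : Option ℝ) : ℝ≥0∞ :=
  sSup (ENNReal.ofReal '' essHeightSet G x y)

/-!
For `g ∈ SL(2,ℝ)` with `c = c(g) ≠ 0`, the geodesic `g(γ(∞,α))` runs from `a/c` to `g·α`, so its
height is `1 / (2 |c (cα + d)|)`; on the other hand `g⁻¹·∞ = -d/c` and
`|α − g⁻¹·∞| · c(g⁻¹)² = |c (cα + d)|`. So `g ↦ g⁻¹` turns approximations of quality `k` into
geodesics of height at least `k/2` and back. Since `g⁻¹` and `h⁻¹` are equivalent modulo infinity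
exactly when `g·∞ = h·∞`, infinitely many inequivalent `g` correspond to infinitely many distinct
approximants `g·∞`, and the two suprema differ by the factor `2`.
-/

section Entries

variable (g h : SL2R)

lemma entryA_mul_entryD_sub_entryB_mul_entryC : entryA g * entryD g - entryB g * entryC g = 1 := by
  have h := g.2
  rw [Matrix.det_fin_two] at h
  simpa [entryA, entryB, entryC, entryD] using h

lemma entryA_inv : entryA g⁻¹ = entryD g := by
  rw [entryA, Matrix.SpecialLinearGroup.SL2_inv_expl]; rfl

lemma entryC_inv : entryC g⁻¹ = -entryC g := by
  rw [entryC, Matrix.SpecialLinearGroup.SL2_inv_expl]; rfl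

variable {g} in
lemma entryC_inv_ne_zero (hc : entryC g ≠ 0) : entryC g⁻¹ ≠ 0 := by
  rwa [entryC_inv, neg_ne_zero]

lemma entryD_inv : entryD g⁻¹ = entryA g := by
  rw [entryD, Matrix.SpecialLinearGroup.SL2_inv_expl]; rfl

lemma entryC_mul : entryC (g * h) = entryC g * entryA h + entryD g * entryC h := by
  simp [entryC, entryA, entryD, Matrix.mul_apply, Fin.sum_univ_two]

lemma entryC_mul_inv : entryC (g * h⁻¹) = entryC g * entryD h - entryD g * entryC h := by
  rw [entryC_mul, entryA_inv, entryC_inv]; ring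

end Entries

section EquivModInf

variable {G : Subgroup SL2R} {g h : SL2R}

lemma equivModInf_iff (hg : g ∈ G) (hh : h ∈ G) : EquivModInf G g h ↔ entryC (g * h⁻¹) = 0 := by
  constructor
  · rintro ⟨k, -, hk, rfl⟩
    simpa using hk
  · exact fun hc => ⟨g * h⁻¹, G.mul_mem hg (G.inv_mem hh), hc, by group⟩

lemma equivModInf_inv_iff (hg : g ∈ G) (hh : h ∈ G) (hgc : entryC g ≠ 0) (hhc : entryC h ≠ 0) :
    EquivModInf G g⁻¹ h⁻¹ ↔ entryA g / entryC g = entryA h / entryC h := by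
  rw [equivModInf_iff (G.inv_mem hg) (G.inv_mem hh), entryC_mul_inv, entryC_inv, entryD_inv,
    entryC_inv, entryD_inv, div_eq_div_iff hgc hhc]
  constructor <;> intro _ <;> linarith

end EquivModInf

section Heights

variable {g : SL2R}

lemma ofReal_le_naiveHeight_iff (hc : entryC g ≠ 0) (k α : ℝ) :
    ENNReal.ofReal k ≤ naiveHeight (bdAct g none) (bdAct g (some α)) ↔
      2 * k * |entryC g * (entryC g * α + entryD g)| ≤ 1 := by
  by_cases hy : entryC g * α + entryD g = 0
  · simp [bdAct, naiveHeight, hc, hy]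
  have key : entryA g / entryC g - (entryA g * α + entryB g) / (entryC g * α + entryD g)
      = 1 / (entryC g * (entryC g * α + entryD g)) := by
    field_simp
    linear_combination entryA_mul_entryD_sub_entryB_mul_entryC g
  have hpos : 0 < |entryC g * (entryC g * α + entryD g)| := abs_pos.2 (mul_ne_zero hc hy)
  simp only [bdAct, if_neg hc, if_neg hy, naiveHeight, key]
  rw [ENNReal.ofReal_le_ofReal_iff (by positivity), abs_div, abs_one, div_div,
    le_div_iff₀ (by positivity)]
  constructor <;> intro _ <;> linarith

lemma abs_sub_lt_one_div_iff (hc : entryC g ≠ 0) {k : ℝ} (hk : 0 < k) (α : ℝ) :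
    |α - entryA g⁻¹ / entryC g⁻¹| < 1 / (k * entryC g⁻¹ ^ 2) ↔
      k * |entryC g * (entryC g * α + entryD g)| < 1 := by
  have hsub : α - entryA g⁻¹ / entryC g⁻¹ = (entryC g * α + entryD g) / entryC g := by
    rw [entryA_inv, entryC_inv]
    field_simp
    ring
  have hcpos : 0 < |entryC g| := abs_pos.2 hc
  rw [hsub, abs_div, entryC_inv, neg_sq, ← sq_abs, div_lt_div_iff₀ hcpos (by positivity), abs_mul]
  constructor <;> intro _ <;> nlinarith

end Heights

section Lagrange

variable {G : Subgroup SL2R} {α : ℝ}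

lemma half_mem_essHeightSet {k : ℝ} (hk : k ∈ LagrangeSet G α) :
    k / 2 ∈ essHeightSet G none (some α) := by
  obtain ⟨hk0, hV⟩ := hk
  set W := {g : SL2R | g ∈ G ∧ entryC g ≠ 0 ∧ |α - entryA g / entryC g| < 1 / (k * entryC g ^ 2)}
  have hVW : {v : ℝ | ∃ g ∈ G, entryC g ≠ 0 ∧ v = entryA g / entryC g ∧
      |α - v| < 1 / (k * entryC g ^ 2)} = (fun g => entryA g / entryC g) '' W := by
    ext v
    constructor
    · rintro ⟨g, hg, hc, rfl, hlt⟩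
      exact ⟨g, ⟨hg, hc, hlt⟩, rfl⟩
    · rintro ⟨g, ⟨hg, hc, hlt⟩, rfl⟩
      exact ⟨g, hg, hc, rfl, hlt⟩
  obtain ⟨W₀, hW₀, hbij⟩ := Set.exists_subset_bijOn W fun g => entryA g / entryC g
  refine ⟨by positivity, (·⁻¹) '' W₀, ?_, ?_, ?_⟩
  · rw [hVW, ← hbij.image_eq] at hV
    exact (hV.of_image _).image inv_injective.injOn
  · rintro _ ⟨g, hg, rfl⟩
    obtain ⟨hgG, hgc, hlt⟩ := hW₀ hg
    have hc := entryC_inv_ne_zero hgc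
    refine ⟨G.inv_mem hgG, (ofReal_le_naiveHeight_iff hc _ α).2 ?_⟩
    have := (abs_sub_lt_one_div_iff hc hk0 α).1 (by simpa using hlt)
    linarith
  · rintro _ ⟨g, hg, rfl⟩ _ ⟨h, hh, rfl⟩ hne heq
    obtain ⟨hgG, hgc, -⟩ := hW₀ hg
    obtain ⟨hhG, hhc, -⟩ := hW₀ hh
    exact hne (congrArg _ (hbij.injOn hg hh ((equivModInf_inv_iff hgG hhG hgc hhc).1 heq)))

lemma mem_lagrangeSet_of_lt_two_mul {k k' : ℝ} (hk : k ∈ essHeightSet G none (some α))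
    (hk' : 0 < k') (hlt : k' < 2 * k) : k' ∈ LagrangeSet G α := by
  obtain ⟨-, S, hS, hSG, hSpair⟩ := hk
  have hfix : {g | g ∈ S ∧ entryC g = 0}.Subsingleton := by
    intro g hg h hh
    by_contra hne
    refine hSpair hg.1 hh.1 hne ((equivModInf_iff (hSG g hg.1).1 (hSG h hh.1).1).2 ?_)
    rw [entryC_mul_inv, hg.2, hh.2]
    ring
  have hS' : {g | g ∈ S ∧ entryC g ≠ 0}.Infinite :=
    (hS.sdiff hfix.finite).mono fun g hg => ⟨hg.1, fun hc => hg.2 ⟨hg.1, hc⟩⟩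
  have hinj : Set.InjOn (fun g => entryA g⁻¹ / entryC g⁻¹) {g | g ∈ S ∧ entryC g ≠ 0} := by
    intro g hg h hh he
    by_contra hne
    have := (equivModInf_inv_iff (G.inv_mem (hSG g hg.1).1) (G.inv_mem (hSG h hh.1).1)
      (entryC_inv_ne_zero hg.2) (entryC_inv_ne_zero hh.2)).2 he
    exact hSpair hg.1 hh.1 hne (by simpa using this)
  refine ⟨hk', (hS'.image hinj).mono ?_⟩
  rintro _ ⟨g, ⟨hgS, hgc⟩, rfl⟩
  refine ⟨g⁻¹, G.inv_mem (hSG g hgS).1, entryC_inv_ne_zero hgc, rfl, ?_⟩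
  rw [abs_sub_lt_one_div_iff hgc hk' α]
  have hheight := (ofReal_le_naiveHeight_iff hgc k α).1 (hSG g hgS).2
  nlinarith [abs_nonneg (entryC g * (entryC g * α + entryD g))]

end Lagrange

lemma ENNReal.sSup_ofReal_image_eq_two_mul {L E : Set ℝ} (hLE : ∀ k ∈ L, k / 2 ∈ E)
    (hEL : ∀ k ∈ E, ∀ k', 0 < k' → k' < 2 * k → k' ∈ L) :
    sSup (ENNReal.ofReal '' L) = 2 * sSup (ENNReal.ofReal '' E) := by
  apply le_antisymm
  · refine sSup_le ?_
    rintro _ ⟨k, hk, rfl⟩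
    calc ENNReal.ofReal k = 2 * ENNReal.ofReal (k / 2) := by
          rw [← ENNReal.ofReal_ofNat 2, ← ENNReal.ofReal_mul zero_le_two]
          ring_nf
      _ ≤ 2 * sSup (ENNReal.ofReal '' E) := by
          gcongr
          exact le_sSup (Set.mem_image_of_mem _ (hLE k hk))
  · rw [ENNReal.mul_sSup]
    refine iSup₂_le ?_
    rintro _ ⟨k, hk, rfl⟩
    refine le_of_forall_lt fun c hc => ?_
    rw [← ENNReal.ofReal_ofNat 2, ← ENNReal.ofReal_mul zero_le_two] at hc
    obtain ⟨r, -, hcr, hr⟩ := ENNReal.lt_iff_exists_real_btwn.1 hc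
    have hr0 : 0 < r := ENNReal.ofReal_pos.1 (hcr.trans_le' bot_le)
    exact hcr.trans_le (le_sSup (Set.mem_image_of_mem _
      (hEL k hk r hr0 ((ENNReal.ofReal_lt_ofReal_iff'.1 hr).1))))

theorem lagrange_eq_twice_essential_height_general (G : Subgroup SL2R) (α : ℝ) :
    LagrangeValue G α = 2 * essHeight G none (some α) :=
  ENNReal.sSup_ofReal_image_eq_two_mul (fun _ => half_mem_essHeightSet)
    fun _ hk _ => mem_lagrangeSet_of_lt_two_mul hk

/-- The Lagrange value of `α` equals twice the essential height of the vertical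
geodesic `γ(∞,α)`. -/
theorem lagrange_eq_twice_essential_height (G : Subgroup SL2R)
    (hG : IsNonUniformLattice G) (α : ℝ) :
    LagrangeValue G α = 2 * essHeight G none (some α) :=
  lagrange_eq_twice_essential_height_general G α
end
end

section
/- (Stable Hall Theorem) Fix ε > 0. Let 𝕂 and 𝔽 be Cantor sets in ℝ, each satisfying the ε-stable gap condition, and assume the pair (𝕂,𝔽) satisfies the ε-size condition. Let U ⊆ ℝ² be an open set containing the rectangle [min 𝕂, max 𝕂] × [min 𝔽, max 𝔽], and let S : U → ℝ be a function such that S − S₀ is Lipschitz on U with (1 − Lip(S−S₀))/(1 + Lip(S−S₀)) > 1 − ε. Then S(𝕂 × 𝔽) = S([min 𝕂, max 𝕂] × [min 𝔽, max 𝔽]) (equality of images). -/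
noncomputable section

/-- A Cantor set in `ℝ`: a nonempty compact, perfect, totally disconnected subset. -/
def IsCantorSet (C : Set ℝ) : Prop :=
  C.Nonempty ∧ IsCompact C ∧ Perfect C ∧ IsTotallyDisconnected C

/-- A slow subdivision of a set `C ⊆ ℝ`: a decreasing family of closed sets `level n`,
each the union of `n+1` disjoint compact intervals, starting from
`level 0 = [min C, max C]`, where `level (n+1)` is obtained from `level n` by removing
exactly one nonempty open interval `(e n, f n)` from the connected component
`[a n, b n]` of `level n`, leaving the two disjoint nonempty closed intervals
`[a n, e n]` and `[f n, b n]`; the total intersection is `C`. -/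
structure SlowSubdivision (C : Set ℝ) where
  level : ℕ → Set ℝ
  subset_succ : ∀ n, level (n + 1) ⊆ level n
  level_zero : level 0 = Set.Icc (sInf C) (sSup C)
  pieces : ∀ n, ∃ I : Fin (n + 1) → ℝ × ℝ,
    (∀ i, (I i).1 ≤ (I i).2) ∧
    (∀ i j, i ≠ j → Disjoint (Set.Icc (I i).1 (I i).2) (Set.Icc (I j).1 (I j).2)) ∧
    level n = ⋃ i, Set.Icc (I i).1 (I i).2
  a : ℕ → ℝ
  e : ℕ → ℝ
  f : ℕ → ℝ
  b : ℕ → ℝ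
  a_le_e : ∀ n, a n ≤ e n
  e_lt_f : ∀ n, e n < f n
  f_le_b : ∀ n, f n ≤ b n
  component : ∀ n, connectedComponentIn (level n) (a n) = Set.Icc (a n) (b n)
  level_succ : ∀ n, level (n + 1) = level n \ Set.Ioo (e n) (f n)
  iInter_level : ⋂ n, level n = C

/-- The `ε`-stable gap condition for a slow subdivision: at every stage, the removed
hole `B = (e n, f n)` and the adjacent intervals `K^L = [a n, e n]`, `K^R = [f n, b n]`
satisfy `|B| < (1−ε)|K^L|` and `|B| < (1−ε)|K^R|`. -/
def StableGapCond (ε : ℝ) {C : Set ℝ} (s : SlowSubdivision C) : Prop :=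
  ∀ n, s.f n - s.e n < (1 - ε) * (s.e n - s.a n) ∧
    s.f n - s.e n < (1 - ε) * (s.b n - s.f n)

/-- A Cantor set satisfies the `ε`-stable gap condition if it admits a slow subdivision
satisfying it. -/
def HasStableGap (ε : ℝ) (C : Set ℝ) : Prop :=
  ∃ s : SlowSubdivision C, StableGapCond ε s

/-- `B` is a hole of `C`: a (bounded) connected component of the complement of `C`
contained in `[min C, max C]`. -/
def IsHole (C B : Set ℝ) : Prop :=
  (∃ x ∈ B, connectedComponentIn Cᶜ x = B) ∧ B ⊆ Set.Icc (sInf C) (sSup C)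

/-- The pair `(K, F)` satisfies the `ε`-size condition: every hole of each set has
length at most `(1−ε)` times the length of the other set. -/
def SizeCond (ε : ℝ) (K F : Set ℝ) : Prop :=
  (∀ B, IsHole K B → sSup B - sInf B ≤ (1 - ε) * (sSup F - sInf F)) ∧
  (∀ B, IsHole F B → sSup B - sInf B ≤ (1 - ε) * (sSup K - sInf K))

/-!
Fix `t = S p` with `p` in the rectangle. Call a box `I × J` good if the endpoints of `I` and `J`
lie in `K` and `F`, `S ≤ t` at its lower-left and `S ≥ t` at its upper-right corner, every gap of
`K` inside `I` has length at most `(1 - ε) |J|` and vice versa, and every gap inside `I` (or `J`)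
is at most `1 - ε` times its distance to either end of that interval. The full rectangle is good:
by monotonicity of `S`, the size condition and the stable gap condition.

A good box that is not a point is cut at the largest gap `(e, f)` inside `I` or `J`, say inside
`I`. Since `S - S₀` has small Lipschitz constant and `f - e ≤ (1 - ε) |J|`, we get
`S (f, J.1) ≤ S (e, J.2)`, so `[I.1, e] × J` or `[f, I.2] × J` again brackets `t`; the stable gap
condition is what keeps the smaller gaps far from the new endpoint. Each cut shortens the box by
at least the length of every gap inside it, so by total disconnectedness the boxes shrink to a
point `(x, y) ∈ K × F`, where `S (x, y) = t` by continuity.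
-/
open Set Filter Topology MeasureTheory
open scoped NNReal

namespace SlowSubdivision

variable {C : Set ℝ} (s : SlowSubdivision C)

def gap (n : ℕ) : Set ℝ := Ioo (s.e n) (s.f n)

def gapLength (n : ℕ) : ℝ := s.f n - s.e n

def GapIn (I : ℝ × ℝ) (n : ℕ) : Prop := I.1 ≤ s.e n ∧ s.f n ≤ I.2

variable {s}

lemma GapIn.mono {I I' : ℝ × ℝ} {n : ℕ} (h : s.GapIn I n) (h₁ : I'.1 ≤ I.1)
    (h₂ : I.2 ≤ I'.2) : s.GapIn I' n :=
  ⟨h₁.trans h.1, h.2.trans h₂⟩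

variable (s)

lemma gapLength_pos (n : ℕ) : 0 < s.gapLength n := sub_pos.2 (s.e_lt_f n)

lemma a_le_b (n : ℕ) : s.a n ≤ s.b n :=
  (s.a_le_e n).trans ((s.e_lt_f n).le.trans (s.f_le_b n))

lemma Icc_subset_level (n : ℕ) : Icc (s.a n) (s.b n) ⊆ s.level n :=
  s.component n ▸ connectedComponentIn_subset _ _

lemma gap_subset_level (n : ℕ) : s.gap n ⊆ s.level n :=
  fun _ hx => s.Icc_subset_level n ⟨(s.a_le_e n).trans hx.1.le, hx.2.le.trans (s.f_le_b n)⟩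

lemma mem_level_iff {x : ℝ} (n : ℕ) :
    x ∈ s.level n ↔ x ∈ Icc (sInf C) (sSup C) ∧ ∀ k < n, x ∉ s.gap k := by
  induction n with
  | zero => simp [s.level_zero]
  | succ n ih => rw [s.level_succ, Set.mem_sdiff, ih, Nat.forall_lt_succ_right, and_assoc]; rfl

lemma level_subset_hull (n : ℕ) : s.level n ⊆ Icc (sInf C) (sSup C) :=
  fun _ hx => ((s.mem_level_iff n).1 hx).1

lemma mem_iff_forall_notMem_gap {x : ℝ} :
    x ∈ C ↔ x ∈ Icc (sInf C) (sSup C) ∧ ∀ n, x ∉ s.gap n := by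
  have : x ∈ C ↔ ∀ n, x ∈ s.level n := by
    conv_lhs => rw [← s.iInter_level]
    exact mem_iInter
  simp only [this, s.mem_level_iff]
  exact ⟨fun h => ⟨(h 0).1, fun n => (h (n + 1)).2 n n.lt_succ_self⟩,
    fun h _ => ⟨h.1, fun k _ => h.2 k⟩⟩

lemma subset_hull (s : SlowSubdivision C) : C ⊆ Icc (sInf C) (sSup C) :=
  fun _ hx => (s.mem_iff_forall_notMem_gap.1 hx).1

lemma pairwise_disjoint_gap : Pairwise (Function.onFun Disjoint s.gap) :=
  (pairwise_disjoint_on _).2 fun m n hmn => disjoint_left.2 fun _ hxm hxn =>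
    ((s.mem_level_iff n).1 (s.gap_subset_level n hxn)).2 m hmn hxm

lemma f_le_a_or_b_le_e {m n : ℕ} (hmn : m < n) : s.f m ≤ s.a n ∨ s.b n ≤ s.e m := by
  have hdisj : Disjoint (s.gap m) (Ioo (s.a n) (s.b n)) := disjoint_right.2 fun _ hx =>
    ((s.mem_level_iff n).1 (s.Icc_subset_level n (Ioo_subset_Icc_self hx))).2 m hmn
  rw [gap, Ioo_disjoint_Ioo, min_le_iff, le_max_iff, le_max_iff] at hdisj
  have := s.e_lt_f m
  have := s.e_lt_f n
  have := s.a_le_e n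
  have := s.f_le_b n
  rcases hdisj with (h | h) | (h | h)
  · linarith
  · exact Or.inl h
  · exact Or.inr h
  · linarith

lemma mem_of_mem_Icc_of_notMem_gap {x : ℝ} {n : ℕ} (hx : x ∈ Icc (s.e n) (s.f n))
    (hxn : x ∉ s.gap n) : x ∈ C := by
  refine s.mem_iff_forall_notMem_gap.2 ⟨s.level_subset_hull n (s.Icc_subset_level n
    ⟨(s.a_le_e n).trans hx.1, hx.2.trans (s.f_le_b n)⟩), fun k => ?_⟩
  rcases eq_or_ne k n with rfl | hkn
  · exact hxn
  have := (s.pairwise_disjoint_gap hkn).closure_right isOpen_Ioo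
  rw [gap, gap, closure_Ioo (s.e_lt_f n).ne] at this
  exact disjoint_right.1 this hx

lemma e_mem (n : ℕ) : s.e n ∈ C :=
  s.mem_of_mem_Icc_of_notMem_gap ⟨le_rfl, (s.e_lt_f n).le⟩ fun h => lt_irrefl _ h.1

lemma f_mem (n : ℕ) : s.f n ∈ C :=
  s.mem_of_mem_Icc_of_notMem_gap ⟨(s.e_lt_f n).le, le_rfl⟩ fun h => lt_irrefl _ h.2

lemma gap_subset_hull (n : ℕ) : s.gap n ⊆ Icc (sInf C) (sSup C) :=
  (s.gap_subset_level n).trans (s.level_subset_hull n)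

lemma sSup_sub_sInf_gap (n : ℕ) : sSup (s.gap n) - sInf (s.gap n) = s.gapLength n := by
  rw [gap, csSup_Ioo (s.e_lt_f n), csInf_Ioo (s.e_lt_f n), gapLength]

lemma isHole_gap (n : ℕ) : IsHole C (s.gap n) := by
  have hsub : s.gap n ⊆ Cᶜ := fun x hx hxC => (s.mem_iff_forall_notMem_gap.1 hxC).2 n hx
  obtain ⟨z, hz⟩ := nonempty_Ioo.2 (s.e_lt_f n)
  refine ⟨⟨z, hz, Subset.antisymm (fun w hw => ?_)
    (isPreconnected_Ioo.subset_connectedComponentIn hz hsub)⟩, s.gap_subset_hull n⟩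
  have hord := (isPreconnected_connectedComponentIn (F := Cᶜ) (x := z)).ordConnected
  have hzw := mem_connectedComponentIn (hsub hz)
  have hcomp := connectedComponentIn_subset Cᶜ z
  refine ⟨not_le.1 fun hwe => ?_, not_le.1 fun hfw => ?_⟩
  · exact hcomp (hord.out hw hzw ⟨hwe, hz.1.le⟩) (s.e_mem n)
  · exact hcomp (hord.out hzw hw ⟨hz.2.le, hfw⟩) (s.f_mem n)

lemma finite_setOf_le_gapLength {c : ℝ} (hc : 0 < c) : {n | c ≤ s.gapLength n}.Finite := by
  refine (Measure.finite_const_le_meas_of_disjoint_iUnion volume (ENNReal.ofReal_pos.2 hc)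
    (fun _ => measurableSet_Ioo) s.pairwise_disjoint_gap ?_).subset fun n hn => ?_
  · exact ((measure_mono (iUnion_subset s.gap_subset_hull)).trans_lt measure_Icc_lt_top).ne
  · show ENNReal.ofReal c ≤ volume (Ioo (s.e n) (s.f n))
    rw [Real.volume_Ioo]
    exact ENNReal.ofReal_le_ofReal hn

lemma exists_max_gapLength {P : ℕ → Prop} (h : ∃ n, P n) :
    ∃ N, P N ∧ ∀ m, P m → s.gapLength m ≤ s.gapLength N := by
  obtain ⟨n₀, hn₀⟩ := h
  obtain ⟨N, hN, hmax⟩ := Set.exists_max_image {m | P m ∧ s.gapLength n₀ ≤ s.gapLength m}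
    s.gapLength ((s.finite_setOf_le_gapLength (s.gapLength_pos n₀)).subset fun _ hm => hm.2)
    ⟨n₀, hn₀, le_rfl⟩
  refine ⟨N, hN.1, fun m hm => ?_⟩
  rcases le_total (s.gapLength n₀) (s.gapLength m) with h | h
  · exact hmax m ⟨hm, h⟩
  · exact h.trans (hmax n₀ ⟨hn₀, le_rfl⟩)

lemma exists_gapIn_of_lt (htd : IsTotallyDisconnected C) {x y : ℝ} (hx : x ∈ C) (hy : y ∈ C)
    (hxy : x < y) : ∃ n, s.GapIn (x, y) n := by
  obtain ⟨z, hz, hzC⟩ : ∃ z ∈ Icc x y, z ∉ C := by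
    by_contra! h
    exact hxy.ne (htd _ h isPreconnected_Icc (left_mem_Icc.2 hxy.le) (right_mem_Icc.2 hxy.le))
  obtain ⟨n, hn⟩ : ∃ n, z ∈ s.gap n := by
    by_contra! h
    exact hzC (s.mem_iff_forall_notMem_gap.2
      ⟨⟨(s.subset_hull hx).1.trans hz.1, hz.2.trans (s.subset_hull hy).2⟩, h⟩)
  refine ⟨n, not_lt.1 fun hex => ?_, not_lt.1 fun hfy => ?_⟩
  · exact (s.mem_iff_forall_notMem_gap.1 hx).2 n ⟨hex, hz.1.trans_lt hn.2⟩
  · exact (s.mem_iff_forall_notMem_gap.1 hy).2 n ⟨hn.1.trans_le hz.2, hfy⟩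

end SlowSubdivision

namespace StableGapCond

variable {C : Set ℝ} {s : SlowSubdivision C} {ε : ℝ}

lemma one_sub_pos (h : StableGapCond ε s) : 0 < 1 - ε := by
  by_contra! hε
  have := mul_nonpos_of_nonpos_of_nonneg hε (sub_nonneg.2 (s.a_le_e 0))
  linarith [(h 0).1, s.e_lt_f 0]

/- If `m` was removed before `n`, it lies outside the component `[a n, b n]` split by `n`;
otherwise `m` splits a component that ends before `e n`. Either way, the stable gap condition at
the later of the two stages bounds `s.gapLength m`. -/
lemma gapLength_le_of_left (h : StableGapCond ε s) {m n : ℕ} (hmn : s.f m ≤ s.e n)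
    (hlen : s.gapLength m ≤ s.gapLength n) :
    s.gapLength m ≤ (1 - ε) * (s.e n - s.f m) := by
  have := h.one_sub_pos
  have := s.e_lt_f m
  have := s.e_lt_f n
  have := s.a_le_e m
  have := s.f_le_b n
  rcases lt_trichotomy m n with hlt | rfl | hlt
  · have han : s.f m ≤ s.a n := (s.f_le_a_or_b_le_e hlt).resolve_right (by linarith)
    calc s.gapLength m ≤ s.gapLength n := hlen
      _ ≤ (1 - ε) * (s.e n - s.a n) := (h n).1.le
      _ ≤ (1 - ε) * (s.e n - s.f m) := by gcongr
  · linarith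
  · have hbm : s.b m ≤ s.e n := (s.f_le_a_or_b_le_e hlt).resolve_left (by linarith)
    calc s.gapLength m ≤ (1 - ε) * (s.b m - s.f m) := (h m).2.le
      _ ≤ (1 - ε) * (s.e n - s.f m) := by gcongr

lemma gapLength_le_of_right (h : StableGapCond ε s) {m n : ℕ} (hnm : s.f n ≤ s.e m)
    (hlen : s.gapLength m ≤ s.gapLength n) :
    s.gapLength m ≤ (1 - ε) * (s.e m - s.f n) := by
  have := h.one_sub_pos
  have := s.e_lt_f m
  have := s.e_lt_f n
  have := s.a_le_e n
  have := s.f_le_b m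
  rcases lt_trichotomy m n with hlt | rfl | hlt
  · have hbn : s.b n ≤ s.e m := (s.f_le_a_or_b_le_e hlt).resolve_left (by linarith)
    calc s.gapLength m ≤ s.gapLength n := hlen
      _ ≤ (1 - ε) * (s.b n - s.f n) := (h n).2.le
      _ ≤ (1 - ε) * (s.e m - s.f n) := by gcongr
  · linarith
  · have hfa : s.f n ≤ s.a m := (s.f_le_a_or_b_le_e hlt).resolve_right (by linarith)
    calc s.gapLength m ≤ (1 - ε) * (s.e m - s.a m) := (h m).1.le
      _ ≤ (1 - ε) * (s.e m - s.f n) := by gcongr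

end StableGapCond

lemma exists_neg_of_forall_add_le {σ : ℕ → ℝ} {c : ℝ} (hc : 0 < c)
    (h : ∀ k, σ (k + 1) + c ≤ σ k) : ∃ k, σ k < 0 := by
  have hσ : ∀ k : ℕ, σ k + k * c ≤ σ 0 := by
    intro k
    induction k with
    | zero => simp
    | succ k ih => push_cast; linarith [h k]
  obtain ⟨k, hk⟩ := exists_nat_gt (σ 0 / c)
  exact ⟨k, by linarith [hσ k, (div_lt_iff₀ hc).1 hk]⟩

namespace SlowSubdivision

variable {C : Set ℝ} (s : SlowSubdivision C) {ε : ℝ}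

-- An interval `I` is encoded by its endpoints: it stands for `[I.1, I.2]`.
structure IsStableInterval (ε : ℝ) (I : ℝ × ℝ) : Prop where
  le : I.1 ≤ I.2
  fst_mem : I.1 ∈ C
  snd_mem : I.2 ∈ C
  gapLength_le_left : ∀ n, s.GapIn I n → s.gapLength n ≤ (1 - ε) * (s.e n - I.1)
  gapLength_le_right : ∀ n, s.GapIn I n → s.gapLength n ≤ (1 - ε) * (I.2 - s.f n)

lemma isStableInterval_hull (h : StableGapCond ε s) (hC : IsCompact C) (hne : C.Nonempty) :
    s.IsStableInterval ε (sInf C, sSup C) where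
  le := csInf_le_csSup hne hC.bddBelow hC.bddAbove
  fst_mem := hC.sInf_mem hne
  snd_mem := hC.sSup_mem hne
  gapLength_le_left n _ := by
    have := (s.level_subset_hull n (s.Icc_subset_level n (left_mem_Icc.2 (s.a_le_b n)))).1
    have := h.one_sub_pos
    calc s.gapLength n ≤ (1 - ε) * (s.e n - s.a n) := (h n).1.le
      _ ≤ (1 - ε) * (s.e n - sInf C) := by gcongr
  gapLength_le_right n _ := by
    have := (s.level_subset_hull n (s.Icc_subset_level n (right_mem_Icc.2 (s.a_le_b n)))).2
    have := h.one_sub_pos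
    calc s.gapLength n ≤ (1 - ε) * (s.b n - s.f n) := (h n).2.le
      _ ≤ (1 - ε) * (sSup C - s.f n) := by gcongr

variable {s}

lemma IsStableInterval.cut_left {I : ℝ × ℝ} {N : ℕ} (hI : s.IsStableInterval ε I)
    (h : StableGapCond ε s) (hN : s.GapIn I N)
    (hmax : ∀ m, s.GapIn I m → s.gapLength m ≤ s.gapLength N) :
    s.IsStableInterval ε (I.1, s.e N) where
  le := hN.1
  fst_mem := hI.fst_mem
  snd_mem := s.e_mem N
  gapLength_le_left m hm :=
    hI.gapLength_le_left m (hm.mono le_rfl ((s.e_lt_f N).le.trans hN.2))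
  gapLength_le_right m hm :=
    h.gapLength_le_of_left hm.2 (hmax m (hm.mono le_rfl ((s.e_lt_f N).le.trans hN.2)))

lemma IsStableInterval.cut_right {I : ℝ × ℝ} {N : ℕ} (hI : s.IsStableInterval ε I)
    (h : StableGapCond ε s) (hN : s.GapIn I N)
    (hmax : ∀ m, s.GapIn I m → s.gapLength m ≤ s.gapLength N) :
    s.IsStableInterval ε (s.f N, I.2) where
  le := hN.2
  fst_mem := s.f_mem N
  snd_mem := hI.snd_mem
  gapLength_le_left m hm :=
    h.gapLength_le_of_right hm.1 (hmax m (hm.mono (hN.1.trans (s.e_lt_f N).le) le_rfl))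
  gapLength_le_right m hm :=
    hI.gapLength_le_right m (hm.mono (hN.1.trans (s.e_lt_f N).le) le_rfl)

variable (s)

lemma exists_tendsto_of_shrinking (hC : IsClosed C) (htd : IsTotallyDisconnected C)
    {a b σ : ℕ → ℝ} (ha : Monotone a) (hb : Antitone b) (hab : ∀ k, a k ≤ b k)
    (haC : ∀ k, a k ∈ C) (hbC : ∀ k, b k ∈ C) (hσ : ∀ k, 0 ≤ σ k)
    (hσgap : ∀ k n, s.GapIn (a k, b k) n → σ (k + 1) + s.gapLength n ≤ σ k) :
    ∃ x ∈ C, Tendsto a atTop (𝓝 x) ∧ Tendsto b atTop (𝓝 x) := by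
  have hab' : ∀ j k, a j ≤ b k := fun j k =>
    (ha (le_max_left j k)).trans ((hab _).trans (hb (le_max_right j k)))
  have ha_bdd : BddAbove (range a) := ⟨b 0, forall_mem_range.2 fun j => hab' j 0⟩
  have hb_bdd : BddBelow (range b) := ⟨a 0, forall_mem_range.2 fun k => hab' 0 k⟩
  have hxC := hC.mem_of_tendsto (tendsto_atTop_ciSup ha ha_bdd) (Eventually.of_forall haC)
  have hyC := hC.mem_of_tendsto (tendsto_atTop_ciInf hb hb_bdd) (Eventually.of_forall hbC)
  have hxy : ⨆ k, a k = ⨅ k, b k := by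
    refine le_antisymm (le_ciInf fun k => ciSup_le fun j => hab' j k) (not_lt.1 fun hlt => ?_)
    obtain ⟨n, hn⟩ := s.exists_gapIn_of_lt htd hxC hyC hlt
    obtain ⟨k, hk⟩ := exists_neg_of_forall_add_le (s.gapLength_pos n) fun k =>
      hσgap k n (hn.mono (le_ciSup ha_bdd k) (ciInf_le hb_bdd k))
    exact (hσ k).not_gt hk
  exact ⟨_, hxC, tendsto_atTop_ciSup ha ha_bdd, hxy ▸ tendsto_atTop_ciInf hb hb_bdd⟩

end SlowSubdivision

def SteepAntitone (S : ℝ × ℝ → ℝ) (A B : Set ℝ) (δ : ℝ) : Prop :=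
  ∀ ⦃u⦄, u ∈ A → ∀ ⦃v⦄, v ∈ A → ∀ ⦃c⦄, c ∈ B → ∀ ⦃d⦄, d ∈ B →
    u ≤ v → c ≤ d → v - u ≤ δ * (d - c) → S (v, c) ≤ S (u, d)

section SteepAntitone

variable {S : ℝ × ℝ → ℝ} {A B : Set ℝ} {δ : ℝ}

lemma SteepAntitone.mono {A' B' : Set ℝ} (h : SteepAntitone S A B δ) (hA : A' ⊆ A)
    (hB : B' ⊆ B) : SteepAntitone S A' B' δ :=
  fun _ hu _ hv _ hc _ hd => h (hA hu) (hA hv) (hB hc) (hB hd)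

lemma SteepAntitone.monotoneOn (h : SteepAntitone S A B δ)
    (h' : SteepAntitone (S ∘ Prod.swap) B A δ) (hδ : 0 ≤ δ) : MonotoneOn S (A ×ˢ B) := by
  rintro ⟨x, y⟩ ⟨hx, hy⟩ ⟨x', y'⟩ ⟨hx', hy'⟩ ⟨hxx', hyy'⟩
  calc S (x, y) ≤ S (x', y) :=
        h' hy hy hx hx' le_rfl hxx' (by rw [sub_self]; exact mul_nonneg hδ (sub_nonneg.2 hxx'))
    _ ≤ S (x', y') :=
        h hx' hx' hy hy' le_rfl hyy' (by rw [sub_self]; exact mul_nonneg hδ (sub_nonneg.2 hyy'))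

lemma steepAntitone_of_lipschitzOnWith {L : ℝ≥0}
    (hS : LipschitzOnWith L (fun p => S p - (p.1 + p.2)) (A ×ˢ B))
    (hδ : (1 + L) * δ ≤ 1 - L) : SteepAntitone S A B δ := by
  intro u hu v hv c hc d hd huv hcd hvu
  have hdist : dist (v, c) (u, d) ≤ (v - u) + (d - c) := by
    rw [Prod.dist_eq, Real.dist_eq, Real.dist_eq, abs_of_nonneg (sub_nonneg.2 huv),
      abs_of_nonpos (sub_nonpos.2 hcd)]
    exact max_le (by linarith) (by linarith)
  have hlip := hS.dist_le_mul (v, c) ⟨hv, hc⟩ (u, d) ⟨hu, hd⟩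
  rw [Real.dist_eq] at hlip
  have h₁ := (abs_le.1 hlip).2
  have h₂ : (L : ℝ) * dist (v, c) (u, d) ≤ L * ((v - u) + (d - c)) :=
    mul_le_mul_of_nonneg_left hdist L.2
  have h₃ : (1 + L) * (v - u) ≤ (1 + L) * (δ * (d - c)) :=
    mul_le_mul_of_nonneg_left hvu (by positivity)
  have h₄ : (1 + L) * δ * (d - c) ≤ (1 - L) * (d - c) :=
    mul_le_mul_of_nonneg_right hδ (sub_nonneg.2 hcd)
  dsimp only at h₁
  linarith

lemma LipschitzOnWith.comp_swap_sub_add {L : ℝ≥0}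
    (h : LipschitzOnWith L (fun p => S p - (p.1 + p.2)) (A ×ˢ B)) :
    LipschitzOnWith L (fun p => (S ∘ Prod.swap) p - (p.1 + p.2)) (B ×ˢ A) := by
  intro p hp q hq
  have := h (show p.swap ∈ A ×ˢ B from ⟨hp.2, hp.1⟩)
    (show q.swap ∈ A ×ˢ B from ⟨hq.2, hq.1⟩)
  simpa [Prod.edist_eq, max_comm, add_comm] using this

lemma continuousOn_of_lipschitzOnWith_sub_add {L : ℝ≥0} {R : Set (ℝ × ℝ)}
    (h : LipschitzOnWith L (fun p => S p - (p.1 + p.2)) R) : ContinuousOn S R :=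
  (h.continuousOn.add (continuous_fst.add continuous_snd).continuousOn).congr
    fun p _ => (sub_add_cancel (S p) _).symm

end SteepAntitone

section Box

variable {K F : Set ℝ} {sK : SlowSubdivision K} {sF : SlowSubdivision F} {ε : ℝ}
  {S : ℝ × ℝ → ℝ} {t : ℝ} {I J : ℝ × ℝ}

structure IsGoodBox (sK : SlowSubdivision K) (sF : SlowSubdivision F) (ε : ℝ)
    (S : ℝ × ℝ → ℝ) (t : ℝ) (I J : ℝ × ℝ) : Prop where
  fst : sK.IsStableInterval ε I
  snd : sF.IsStableInterval ε J
  gapLength_fst_le : ∀ n, sK.GapIn I n → sK.gapLength n ≤ (1 - ε) * (J.2 - J.1)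
  gapLength_snd_le : ∀ n, sF.GapIn J n → sF.gapLength n ≤ (1 - ε) * (I.2 - I.1)
  lower : S (I.1, J.1) ≤ t
  upper : t ≤ S (I.2, J.2)

def boxSize (I J : ℝ × ℝ) : ℝ := (I.2 - I.1) + (J.2 - J.1)

structure Shrinks (sK : SlowSubdivision K) (sF : SlowSubdivision F) (I J I' J' : ℝ × ℝ) :
    Prop where
  fst_left_le : I.1 ≤ I'.1
  fst_right_le : I'.2 ≤ I.2
  snd_left_le : J.1 ≤ J'.1
  snd_right_le : J'.2 ≤ J.2
  add_gapLength_fst_le : ∀ n, sK.GapIn I n → boxSize I' J' + sK.gapLength n ≤ boxSize I J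
  add_gapLength_snd_le : ∀ n, sF.GapIn J n → boxSize I' J' + sF.gapLength n ≤ boxSize I J

lemma isGoodBox_hull (hgK : StableGapCond ε sK) (hgF : StableGapCond ε sF) (hKc : IsCompact K)
    (hKne : K.Nonempty) (hFc : IsCompact F) (hFne : F.Nonempty) (hsize : SizeCond ε K F)
    (hlower : S (sInf K, sInf F) ≤ t) (hupper : t ≤ S (sSup K, sSup F)) :
    IsGoodBox sK sF ε S t (sInf K, sSup K) (sInf F, sSup F) where
  fst := sK.isStableInterval_hull hgK hKc hKne
  snd := sF.isStableInterval_hull hgF hFc hFne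
  gapLength_fst_le n _ := sK.sSup_sub_sInf_gap n ▸ hsize.1 _ (sK.isHole_gap n)
  gapLength_snd_le n _ := sF.sSup_sub_sInf_gap n ▸ hsize.2 _ (sF.isHole_gap n)
  lower := hlower
  upper := hupper

lemma IsGoodBox.swap (h : IsGoodBox sK sF ε S t I J) :
    IsGoodBox sF sK ε (S ∘ Prod.swap) t J I :=
  ⟨h.snd, h.fst, h.gapLength_snd_le, h.gapLength_fst_le, h.lower, h.upper⟩

lemma IsGoodBox.of_swap (h : IsGoodBox sF sK ε (S ∘ Prod.swap) t J I) :
    IsGoodBox sK sF ε S t I J :=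
  ⟨h.snd, h.fst, h.gapLength_snd_le, h.gapLength_fst_le, h.lower, h.upper⟩

lemma Shrinks.of_swap {I' J' : ℝ × ℝ} (h : Shrinks sF sK J I J' I') :
    Shrinks sK sF I J I' J' where
  fst_left_le := h.snd_left_le
  fst_right_le := h.snd_right_le
  snd_left_le := h.fst_left_le
  snd_right_le := h.fst_right_le
  add_gapLength_fst_le n hn := by
    have := h.add_gapLength_snd_le n hn
    unfold boxSize at *
    linarith
  add_gapLength_snd_le n hn := by
    have := h.add_gapLength_fst_le n hn
    unfold boxSize at *
    linarith

lemma IsGoodBox.exists_cut_fst (h : IsGoodBox sK sF ε S t I J) (hgK : StableGapCond ε sK)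
    (hS : SteepAntitone S K F (1 - ε)) {N : ℕ} (hN : sK.GapIn I N)
    (hmaxK : ∀ m, sK.GapIn I m → sK.gapLength m ≤ sK.gapLength N)
    (hmaxF : ∀ m, sF.GapIn J m → sF.gapLength m ≤ sK.gapLength N) :
    ∃ I', IsGoodBox sK sF ε S t I' J ∧ Shrinks sK sF I J I' J := by
  have hshrinks : ∀ I' : ℝ × ℝ, I.1 ≤ I'.1 → I'.2 ≤ I.2 →
      (I'.2 - I'.1) + sK.gapLength N ≤ I.2 - I.1 → Shrinks sK sF I J I' J :=
    fun I' h₁ h₂ h₃ => ⟨h₁, h₂, le_rfl, le_rfl,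
      fun n hn => by have := hmaxK n hn; unfold boxSize; linarith,
      fun n hn => by have := hmaxF n hn; unfold boxSize; linarith⟩
  have hef := sK.e_lt_f N
  by_cases ht : t ≤ S (sK.e N, J.2)
  · refine ⟨(I.1, sK.e N), ⟨h.fst.cut_left hgK hN hmaxK, h.snd,
      fun n hn => h.gapLength_fst_le n (hn.mono le_rfl (hef.le.trans hN.2)),
      fun n hn => (hmaxF n hn).trans (h.fst.gapLength_le_left N hN), h.lower, ht⟩,
      hshrinks _ le_rfl (hef.le.trans hN.2) ?_⟩
    simp only [SlowSubdivision.gapLength]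
    linarith [hN.2]
  · have hjump : S (sK.f N, J.1) ≤ S (sK.e N, J.2) :=
      hS (sK.e_mem N) (sK.f_mem N) h.snd.fst_mem h.snd.snd_mem hef.le h.snd.le
        (h.gapLength_fst_le N hN)
    refine ⟨(sK.f N, I.2), ⟨h.fst.cut_right hgK hN hmaxK, h.snd,
      fun n hn => h.gapLength_fst_le n (hn.mono (hN.1.trans hef.le) le_rfl),
      fun n hn => (hmaxF n hn).trans (h.fst.gapLength_le_right N hN),
      hjump.trans (not_le.1 ht).le, h.upper⟩, hshrinks _ (hN.1.trans hef.le) le_rfl ?_⟩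
    simp only [SlowSubdivision.gapLength]
    linarith [hN.1]

lemma IsGoodBox.exists_shrinks (h : IsGoodBox sK sF ε S t I J) (hgK : StableGapCond ε sK)
    (hgF : StableGapCond ε sF) (hS : SteepAntitone S K F (1 - ε))
    (hS' : SteepAntitone (S ∘ Prod.swap) F K (1 - ε)) :
    ∃ I' J', IsGoodBox sK sF ε S t I' J' ∧ Shrinks sK sF I J I' J' := by
  by_cases hI : ∃ n, sK.GapIn I n
  · obtain ⟨N, hN, hmaxK⟩ := sK.exists_max_gapLength hI
    by_cases hJ : ∃ m, sF.GapIn J m ∧ sK.gapLength N < sF.gapLength m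
    · obtain ⟨M, hM, hmaxF⟩ := sF.exists_max_gapLength (hJ.imp fun _ => And.left)
      obtain ⟨m, hm, hNm⟩ := hJ
      obtain ⟨J', h', hs⟩ := h.swap.exists_cut_fst hgF hS' hM hmaxF
        fun n hn => (hmaxK n hn).trans (hNm.le.trans (hmaxF m hm))
      exact ⟨I, J', h'.of_swap, hs.of_swap⟩
    · push Not at hJ
      obtain ⟨I', h', hs⟩ := h.exists_cut_fst hgK hS hN hmaxK hJ
      exact ⟨I', J, h', hs⟩
  · push Not at hI
    by_cases hJ : ∃ m, sF.GapIn J m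
    · obtain ⟨M, hM, hmaxF⟩ := sF.exists_max_gapLength hJ
      obtain ⟨J', h', hs⟩ := h.swap.exists_cut_fst hgF hS' hM hmaxF fun n hn => (hI n hn).elim
      exact ⟨I, J', h'.of_swap, hs.of_swap⟩
    · push Not at hJ
      exact ⟨I, J, h, le_rfl, le_rfl, le_rfl, le_rfl, fun n hn => (hI n hn).elim,
        fun n hn => (hJ n hn).elim⟩

lemma IsGoodBox.exists_shrinking_seq (h : IsGoodBox sK sF ε S t I J)
    (hgK : StableGapCond ε sK) (hgF : StableGapCond ε sF) (hS : SteepAntitone S K F (1 - ε))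
    (hS' : SteepAntitone (S ∘ Prod.swap) F K (1 - ε)) :
    ∃ B : ℕ → (ℝ × ℝ) × (ℝ × ℝ), (∀ k, IsGoodBox sK sF ε S t (B k).1 (B k).2) ∧
      ∀ k, Shrinks sK sF (B k).1 (B k).2 (B (k + 1)).1 (B (k + 1)).2 := by
  have hnext : ∀ B : {B : (ℝ × ℝ) × (ℝ × ℝ) // IsGoodBox sK sF ε S t B.1 B.2},
      ∃ B' : {B : (ℝ × ℝ) × (ℝ × ℝ) // IsGoodBox sK sF ε S t B.1 B.2},
        Shrinks sK sF B.1.1 B.1.2 B'.1.1 B'.1.2 := fun B =>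
    let ⟨I', J', h', hs⟩ := B.2.exists_shrinks hgK hgF hS hS'
    ⟨⟨(I', J'), h'⟩, hs⟩
  choose next hnext using hnext
  refine ⟨fun k => (next^[k] ⟨(I, J), h⟩).1, fun k => (next^[k] _).2, fun k => ?_⟩
  simp only [Function.iterate_succ_apply']
  exact hnext _

theorem IsGoodBox.exists_apply_eq (h : IsGoodBox sK sF ε S t I J) (hgK : StableGapCond ε sK)
    (hgF : StableGapCond ε sF) (hKc : IsClosed K) (hFc : IsClosed F)
    (htdK : IsTotallyDisconnected K) (htdF : IsTotallyDisconnected F)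
    (hS : SteepAntitone S K F (1 - ε)) (hS' : SteepAntitone (S ∘ Prod.swap) F K (1 - ε))
    (hSc : ContinuousOn S (K ×ˢ F)) : ∃ x ∈ K, ∃ y ∈ F, S (x, y) = t := by
  obtain ⟨B, hgood, hB⟩ := h.exists_shrinking_seq hgK hgF hS hS'
  have hsize : ∀ k, 0 ≤ boxSize (B k).1 (B k).2 := fun k =>
    add_nonneg (sub_nonneg.2 (hgood k).fst.le) (sub_nonneg.2 (hgood k).snd.le)
  obtain ⟨x, hxK, hx₁, hx₂⟩ := sK.exists_tendsto_of_shrinking hKc htdK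
    (monotone_nat_of_le_succ fun k => (hB k).fst_left_le)
    (antitone_nat_of_succ_le fun k => (hB k).fst_right_le)
    (fun k => (hgood k).fst.le) (fun k => (hgood k).fst.fst_mem) (fun k => (hgood k).fst.snd_mem)
    hsize fun k n hn => (hB k).add_gapLength_fst_le n hn
  obtain ⟨y, hyF, hy₁, hy₂⟩ := sF.exists_tendsto_of_shrinking hFc htdF
    (monotone_nat_of_le_succ fun k => (hB k).snd_left_le)
    (antitone_nat_of_succ_le fun k => (hB k).snd_right_le)
    (fun k => (hgood k).snd.le) (fun k => (hgood k).snd.fst_mem) (fun k => (hgood k).snd.snd_mem)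
    hsize fun k n hn => (hB k).add_gapLength_snd_le n hn
  have hlim : ∀ {u v : ℕ → ℝ}, Tendsto u atTop (𝓝 x) → Tendsto v atTop (𝓝 y) →
      (∀ k, u k ∈ K) → (∀ k, v k ∈ F) →
        Tendsto (fun k => S (u k, v k)) atTop (𝓝 (S (x, y))) :=
    fun hu hv huK hvF => (hSc (x, y) ⟨hxK, hyF⟩).tendsto.comp <| tendsto_nhdsWithin_iff.2
      ⟨hu.prodMk_nhds hv, Eventually.of_forall fun k => ⟨huK k, hvF k⟩⟩
  refine ⟨x, hxK, y, hyF, le_antisymm ?_ ?_⟩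
  · exact le_of_tendsto
      (hlim hx₁ hy₁ (fun k => (hgood k).fst.fst_mem) fun k => (hgood k).snd.fst_mem)
      (Eventually.of_forall fun k => (hgood k).lower)
  · exact ge_of_tendsto
      (hlim hx₂ hy₂ (fun k => (hgood k).fst.snd_mem) fun k => (hgood k).snd.snd_mem)
      (Eventually.of_forall fun k => (hgood k).upper)

end Box

theorem stable_hall_general (ε : ℝ) (K F : Set ℝ)
    (hK : IsCantorSet K) (hF : IsCantorSet F)
    (hKgap : HasStableGap ε K) (hFgap : HasStableGap ε F)
    (hsize : SizeCond ε K F)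
    (U : Set (ℝ × ℝ))
    (hrect : Set.Icc (sInf K) (sSup K) ×ˢ Set.Icc (sInf F) (sSup F) ⊆ U)
    (S : ℝ × ℝ → ℝ) (L : ℝ) (hL : 0 ≤ L)
    (hLip : ∀ p ∈ U, ∀ q ∈ U,
      |(S p - (p.1 + p.2)) - (S q - (q.1 + q.2))| ≤ L * dist p q)
    (hcond : 1 - ε < (1 - L) / (1 + L)) :
    S '' (K ×ˢ F) = S '' (Set.Icc (sInf K) (sSup K) ×ˢ Set.Icc (sInf F) (sSup F)) := by
  obtain ⟨sK, hgK⟩ := hKgap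
  obtain ⟨sF, hgF⟩ := hFgap
  have hg : LipschitzOnWith L.toNNReal (fun p => S p - (p.1 + p.2))
      (Icc (sInf K) (sSup K) ×ˢ Icc (sInf F) (sSup F)) :=
    LipschitzOnWith.of_dist_le' fun p hp q hq => hLip p (hrect hp) q (hrect hq)
  have hkey : (1 + (L.toNNReal : ℝ)) * (1 - ε) ≤ 1 - L.toNNReal := by
    rw [Real.coe_toNNReal L hL]
    rw [lt_div_iff₀ (by linarith)] at hcond
    linarith
  have hS := steepAntitone_of_lipschitzOnWith hg hkey
  have hS' := steepAntitone_of_lipschitzOnWith hg.comp_swap_sub_add hkey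
  have hKF := prod_mono sK.subset_hull sF.subset_hull
  refine (image_mono hKF).antisymm ?_
  rintro _ ⟨p, hp, rfl⟩
  have hmono := hS.monotoneOn hS' hgK.one_sub_pos.le
  have hK₀ := hp.1.1.trans hp.1.2
  have hF₀ := hp.2.1.trans hp.2.2
  have h₀ : IsGoodBox sK sF ε S (S p) (sInf K, sSup K) (sInf F, sSup F) :=
    isGoodBox_hull hgK hgF hK.2.1 hK.1 hF.2.1 hF.1 hsize
      (hmono ⟨⟨le_rfl, hK₀⟩, ⟨le_rfl, hF₀⟩⟩ hp ⟨hp.1.1, hp.2.1⟩)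
      (hmono hp ⟨⟨hK₀, le_rfl⟩, ⟨hF₀, le_rfl⟩⟩ ⟨hp.1.2, hp.2.2⟩)
  obtain ⟨x, hx, y, hy, hxy⟩ := h₀.exists_apply_eq hgK hgF hK.2.1.isClosed hF.2.1.isClosed
    hK.2.2.2 hF.2.2.2 (hS.mono sK.subset_hull sF.subset_hull)
    (hS'.mono sF.subset_hull sK.subset_hull)
    ((continuousOn_of_lipschitzOnWith_sub_add hg).mono hKF)
  exact ⟨(x, y), ⟨hx, hy⟩, hxy⟩

/-- **Stable Hall Theorem.** Let `𝕂`, `𝔽` be Cantor sets satisfying the `ε`-stable gap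
condition and jointly the `ε`-size condition, contained in an open set `U ⊆ ℝ²`
containing the rectangle `[min 𝕂, max 𝕂] × [min 𝔽, max 𝔽]`. If `S − S₀` is Lipschitz
on `U` with constant `L` satisfying `(1 − L)/(1 + L) > 1 − ε` (where `S₀` is the sum
function), then `S(𝕂 × 𝔽) = S([min 𝕂, max 𝕂] × [min 𝔽, max 𝔽])`. -/
theorem stable_hall (ε : ℝ) (hε : 0 < ε) (K F : Set ℝ)
    (hK : IsCantorSet K) (hF : IsCantorSet F)
    (hKgap : HasStableGap ε K) (hFgap : HasStableGap ε F)
    (hsize : SizeCond ε K F)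
    (U : Set (ℝ × ℝ)) (hU : IsOpen U)
    (hrect : Set.Icc (sInf K) (sSup K) ×ˢ Set.Icc (sInf F) (sSup F) ⊆ U)
    (S : ℝ × ℝ → ℝ) (L : ℝ) (hL : 0 ≤ L)
    (hLip : ∀ p ∈ U, ∀ q ∈ U,
      |(S p - (p.1 + p.2)) - (S q - (q.1 + q.2))| ≤ L * dist p q)
    (hcond : 1 - ε < (1 - L) / (1 + L)) :
    S '' (K ×ˢ F) = S '' (Set.Icc (sInf K) (sSup K) ×ˢ Set.Icc (sInf F) (sSup F)) :=
  stable_hall_general ε K F hK hF hKgap hFgap hsize U hrect S L hL hLip hcond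
end
end

section
/- Let ε > 0, let U ⊆ ℝ², and let S : U → ℝ be a function such that S − S₀ is Lipschitz on U with (1 − Lip(S−S₀))/(1 + Lip(S−S₀)) > 1 − ε. Let K = [a,b] and F = [c,d] be compact intervals with K × F ⊆ U. (i) If B = (e,f) with a < e < f < b is a nonempty open subinterval of K satisfying |B| < (1−ε)·|F|, then S(K × F) = S(K^L × F) ∪ S(K^R × F), where K^L = [a,e] and K^R = [f,b]. (ii) Symmetrically, if C = (e',f') with c < e' < f' < d is a nonempty open subinterval of F satisfying |C| < (1−ε)·|K|, then S(K × F) = S(K × F^L) ∪ S(K × F^R), where F^L = [c,e'] and F^R = [f',d]. -/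
/-!
Since `S - S₀` is `L`-Lipschitz with `L < 1`, `S` is nondecreasing in each coordinate on `U`,
and it is continuous. Hence `S` maps a rectangle `[a, b] × [c, d]` onto the interval
`[S (a, c), S (b, d)]`, and the images of the two sub-rectangles are `[S (a, c), S (e, d)]`
and `[S (f, c), S (b, d)]`. These cover the whole image as soon as they overlap, i.e.
`S (f, c) ≤ S (e, d)`, and the Lipschitz estimate gives
`S (e, d) - S (f, c) ≥ (1 - L) (d - c) - (f - e)`, which is nonnegative because the smallness
condition on `|B|` forces `f - e ≤ (1 - L) (d - c)`. The second statement follows from the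
first by exchanging the coordinates.
-/

open Set

theorem MonotoneOn.image_Icc_of_continuousOn {α β : Type*} [Preorder α] [TopologicalSpace α]
    [ConditionallyCompleteLinearOrder β] [TopologicalSpace β] [OrderTopology β]
    {f : α → β} {x y : α} (hmono : MonotoneOn f (Icc x y)) (hcont : ContinuousOn f (Icc x y))
    (hconn : IsPreconnected (Icc x y)) (hxy : x ≤ y) :
    f '' Icc x y = Icc (f x) (f y) :=
  hmono.image_Icc_subset.antisymm <| (hconn.image f hcont).Icc_subset
    (mem_image_of_mem f (left_mem_Icc.2 hxy)) (mem_image_of_mem f (right_mem_Icc.2 hxy))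

theorem image_Icc_prod_Icc_of_monotoneOn {S : ℝ × ℝ → ℝ} {U : Set (ℝ × ℝ)}
    (hmono : MonotoneOn S U) (hcont : ContinuousOn S U) {a b c d : ℝ} (hab : a ≤ b) (hcd : c ≤ d)
    (hsub : Icc a b ×ˢ Icc c d ⊆ U) :
    S '' (Icc a b ×ˢ Icc c d) = Icc (S (a, c)) (S (b, d)) := by
  rw [Icc_prod_Icc] at hsub ⊢
  refine (hmono.mono hsub).image_Icc_of_continuousOn (hcont.mono hsub) ?_ ⟨hab, hcd⟩
  rw [← Icc_prod_Icc]
  exact isPreconnected_Icc.prod isPreconnected_Icc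

theorem image_Icc_prod_Icc_eq_union_of_monotoneOn {S : ℝ × ℝ → ℝ} {U : Set (ℝ × ℝ)}
    (hmono : MonotoneOn S U) (hcont : ContinuousOn S U) {a b c d e f : ℝ}
    (hae : a ≤ e) (hef : e ≤ f) (hfb : f ≤ b) (hcd : c ≤ d) (hsub : Icc a b ×ˢ Icc c d ⊆ U)
    (hoverlap : S (f, c) ≤ S (e, d)) :
    S '' (Icc a b ×ˢ Icc c d) =
      S '' (Icc a e ×ˢ Icc c d) ∪ S '' (Icc f b ×ˢ Icc c d) := by
  have hab : a ≤ b := hae.trans (hef.trans hfb)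
  have hsubL : Icc a e ×ˢ Icc c d ⊆ U :=
    (prod_mono (Icc_subset_Icc le_rfl (hef.trans hfb)) subset_rfl).trans hsub
  have hsubR : Icc f b ×ˢ Icc c d ⊆ U :=
    (prod_mono (Icc_subset_Icc (hae.trans hef) le_rfl) subset_rfl).trans hsub
  have hmem : ∀ {x y : ℝ}, x ∈ Icc a b → y ∈ Icc c d → (x, y) ∈ U := fun hx hy => hsub ⟨hx, hy⟩
  have hleft : S (a, c) ≤ S (f, c) :=
    hmono (hmem ⟨le_rfl, hab⟩ ⟨le_rfl, hcd⟩) (hmem ⟨hae.trans hef, hfb⟩ ⟨le_rfl, hcd⟩)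
      ⟨hae.trans hef, le_rfl⟩
  have hright : S (e, d) ≤ S (b, d) :=
    hmono (hmem ⟨hae, hef.trans hfb⟩ ⟨hcd, le_rfl⟩) (hmem ⟨hab, le_rfl⟩ ⟨hcd, le_rfl⟩)
      ⟨hef.trans hfb, le_rfl⟩
  rw [image_Icc_prod_Icc_of_monotoneOn hmono hcont hab hcd hsub,
    image_Icc_prod_Icc_of_monotoneOn hmono hcont hae hcd hsubL,
    image_Icc_prod_Icc_of_monotoneOn hmono hcont hfb hcd hsubR,
    Icc_union_Icc' hoverlap (hleft.trans (hoverlap.trans hright)), min_eq_left hleft,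
    max_eq_right hright]

theorem le_one_sub_mul_of_lt_mul {ε L w W : ℝ} (hL : 0 ≤ L)
    (hcond : 1 - ε < (1 - L) / (1 + L)) (hw : 0 < w) (hW : 0 ≤ W) (h : w < (1 - ε) * W) :
    w ≤ (1 - L) * W := by
  have hε : 0 < 1 - ε := by nlinarith
  have hL1 : 0 ≤ 1 - L := ((div_pos_iff_of_pos_right (by linarith)).1 (hε.trans hcond)).le
  calc w ≤ (1 - ε) * W := h.le
    _ ≤ (1 - L) / (1 + L) * W := mul_le_mul_of_nonneg_right hcond.le hW
    _ ≤ (1 - L) * W := mul_le_mul_of_nonneg_right (div_le_self hL1 (by linarith)) hW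

def LipschitzPerturbationOfSumOn (L : ℝ) (S : ℝ × ℝ → ℝ) (U : Set (ℝ × ℝ)) : Prop :=
  ∀ p ∈ U, ∀ q ∈ U, |(S p - (p.1 + p.2)) - (S q - (q.1 + q.2))| ≤ L * dist p q

namespace LipschitzPerturbationOfSumOn

variable {L : ℝ} {S : ℝ × ℝ → ℝ} {U : Set (ℝ × ℝ)}

theorem sum_sub_sum_sub_le (h : LipschitzPerturbationOfSumOn L S U) {p q : ℝ × ℝ}
    (hp : p ∈ U) (hq : q ∈ U) :
    (q.1 + q.2) - (p.1 + p.2) - L * dist p q ≤ S q - S p := by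
  have := (abs_le.mp (h p hp q hq)).2
  linarith

theorem monotoneOn (h : LipschitzPerturbationOfSumOn L S U) (hL : L ≤ 1) : MonotoneOn S U := by
  intro p hp q hq hpq
  have hdist : dist p q ≤ (q.1 - p.1) + (q.2 - p.2) := by
    rw [Prod.dist_eq, Real.dist_eq, Real.dist_eq, abs_sub_comm, abs_of_nonneg (sub_nonneg.2 hpq.1),
      abs_sub_comm, abs_of_nonneg (sub_nonneg.2 hpq.2)]
    exact max_le (by linarith [hpq.2]) (by linarith [hpq.1])
  have : L * dist p q ≤ dist p q := by nlinarith [dist_nonneg (x := p) (y := q)]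
  linarith [h.sum_sub_sum_sub_le hp hq]

theorem continuousOn (h : LipschitzPerturbationOfSumOn L S U) : ContinuousOn S U := by
  have hpert : ContinuousOn (fun p : ℝ × ℝ => S p - (p.1 + p.2)) U :=
    (LipschitzOnWith.of_dist_le' fun p hp q hq => (Real.dist_eq _ _).trans_le (h p hp q hq)
      ).continuousOn
  have hsum : Continuous fun p : ℝ × ℝ => p.1 + p.2 := by fun_prop
  exact (hpert.add hsum.continuousOn).congr fun p _ => (sub_add_cancel _ _).symm

theorem comp_swap (h : LipschitzPerturbationOfSumOn L S U) :
    LipschitzPerturbationOfSumOn L (S ∘ Prod.swap) (Prod.swap ⁻¹' U) := by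
  intro p hp q hq
  have := h p.swap hp q.swap hq
  have hdist : dist p.swap q.swap = dist p q := by
    rw [Prod.dist_eq, Prod.dist_eq]; exact max_comm _ _
  rwa [hdist, Prod.fst_swap, Prod.snd_swap, Prod.fst_swap, Prod.snd_swap, add_comm p.2,
    add_comm q.2] at this

theorem le_of_width_le (h : LipschitzPerturbationOfSumOn L S U) {c d e f : ℝ}
    (hed : (e, d) ∈ U) (hfc : (f, c) ∈ U) (hef : e ≤ f) (hcd : c ≤ d) (hL : 0 ≤ L)
    (hwidth : f - e ≤ (1 - L) * (d - c)) :
    S (f, c) ≤ S (e, d) := by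
  have hdist : dist (f, c) (e, d) ≤ d - c := by
    rw [Prod.dist_eq, Real.dist_eq, Real.dist_eq, abs_of_nonneg (sub_nonneg.2 hef),
      abs_sub_comm, abs_of_nonneg (sub_nonneg.2 hcd)]
    exact max_le (by nlinarith) le_rfl
  have hest := h.sum_sub_sum_sub_le hfc hed
  dsimp only at hest
  nlinarith

theorem image_Icc_prod_Icc_eq_union_fst (h : LipschitzPerturbationOfSumOn L S U) (hL : 0 ≤ L)
    {a b c d e f : ℝ} (hae : a ≤ e) (hef : e < f) (hfb : f ≤ b) (hcd : c ≤ d)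
    (hsub : Icc a b ×ˢ Icc c d ⊆ U) (hwidth : f - e ≤ (1 - L) * (d - c)) :
    S '' (Icc a b ×ˢ Icc c d) =
      S '' (Icc a e ×ˢ Icc c d) ∪ S '' (Icc f b ×ˢ Icc c d) := by
  have hL1 : L ≤ 1 := by nlinarith
  have hed : (e, d) ∈ U := hsub ⟨⟨hae, hef.le.trans hfb⟩, ⟨hcd, le_rfl⟩⟩
  have hfc : (f, c) ∈ U := hsub ⟨⟨hae.trans hef.le, hfb⟩, ⟨le_rfl, hcd⟩⟩
  exact image_Icc_prod_Icc_eq_union_of_monotoneOn (h.monotoneOn hL1) h.continuousOn hae hef.le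
    hfb hcd hsub (h.le_of_width_le hed hfc hef.le hcd hL hwidth)

theorem image_Icc_prod_Icc_eq_union_snd (h : LipschitzPerturbationOfSumOn L S U) (hL : 0 ≤ L)
    {a b c d e f : ℝ} (hce : c ≤ e) (hef : e < f) (hfd : f ≤ d) (hab : a ≤ b)
    (hsub : Icc a b ×ˢ Icc c d ⊆ U) (hwidth : f - e ≤ (1 - L) * (b - a)) :
    S '' (Icc a b ×ˢ Icc c d) =
      S '' (Icc a b ×ˢ Icc c e) ∪ S '' (Icc a b ×ˢ Icc f d) := by
  have := h.comp_swap.image_Icc_prod_Icc_eq_union_fst hL hce hef hfd hab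
    (fun p hp => hsub ⟨hp.2, hp.1⟩) hwidth
  simpa only [image_comp, image_swap_prod] using this

end LipschitzPerturbationOfSumOn

theorem splitting_lemma_general (ε : ℝ) (U : Set (ℝ × ℝ)) (S : ℝ × ℝ → ℝ)
    (L : ℝ) (hL : 0 ≤ L)
    (hLip : ∀ p ∈ U, ∀ q ∈ U,
      |(S p - (p.1 + p.2)) - (S q - (q.1 + q.2))| ≤ L * dist p q)
    (hcond : 1 - ε < (1 - L) / (1 + L))
    (a b c d : ℝ) (hab : a ≤ b) (hcd : c ≤ d)
    (hsub : Set.Icc a b ×ˢ Set.Icc c d ⊆ U) :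
    (∀ e f : ℝ, a < e → e < f → f < b → f - e < (1 - ε) * (d - c) →
      S '' (Set.Icc a b ×ˢ Set.Icc c d) =
        S '' (Set.Icc a e ×ˢ Set.Icc c d) ∪ S '' (Set.Icc f b ×ˢ Set.Icc c d)) ∧
    (∀ e f : ℝ, c < e → e < f → f < d → f - e < (1 - ε) * (b - a) →
      S '' (Set.Icc a b ×ˢ Set.Icc c d) =
        S '' (Set.Icc a b ×ˢ Set.Icc c e) ∪ S '' (Set.Icc a b ×ˢ Set.Icc f d)) := by
  have hLip : LipschitzPerturbationOfSumOn L S U := hLip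
  refine ⟨fun e f hae hef hfb hB => ?_, fun e f hce hef hfd hB => ?_⟩
  · exact hLip.image_Icc_prod_Icc_eq_union_fst hL hae.le hef hfb.le hcd hsub
      (le_one_sub_mul_of_lt_mul hL hcond (sub_pos.2 hef) (sub_nonneg.2 hcd) hB)
  · exact hLip.image_Icc_prod_Icc_eq_union_snd hL hce.le hef hfd.le hab hsub
      (le_one_sub_mul_of_lt_mul hL hcond (sub_pos.2 hef) (sub_nonneg.2 hab) hB)

/-- **Key splitting lemma for the Stable Hall theorem.** Suppose `S − S₀` is Lipschitz
on `U` with constant `L` satisfying `(1 − L)/(1 + L) > 1 − ε`, and let `K = [a,b]`,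
`F = [c,d]` be compact intervals with `K × F ⊆ U`. (i) If `B = (e,f) ⊂ K` is a
nonempty open subinterval with `|B| < (1−ε)|F|`, then
`S(K × F) = S(K^L × F) ∪ S(K^R × F)`. (ii) Symmetrically in the second coordinate. -/
theorem splitting_lemma (ε : ℝ) (hε : 0 < ε) (U : Set (ℝ × ℝ)) (S : ℝ × ℝ → ℝ)
    (L : ℝ) (hL : 0 ≤ L)
    (hLip : ∀ p ∈ U, ∀ q ∈ U,
      |(S p - (p.1 + p.2)) - (S q - (q.1 + q.2))| ≤ L * dist p q)
    (hcond : 1 - ε < (1 - L) / (1 + L))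
    (a b c d : ℝ) (hab : a ≤ b) (hcd : c ≤ d)
    (hsub : Set.Icc a b ×ˢ Set.Icc c d ⊆ U) :
    (∀ e f : ℝ, a < e → e < f → f < b → f - e < (1 - ε) * (d - c) →
      S '' (Set.Icc a b ×ˢ Set.Icc c d) =
        S '' (Set.Icc a e ×ˢ Set.Icc c d) ∪ S '' (Set.Icc f b ×ˢ Set.Icc c d)) ∧
    (∀ e f : ℝ, c < e → e < f → f < d → f - e < (1 - ε) * (b - a) →
      S '' (Set.Icc a b ×ˢ Set.Icc c d) =
        S '' (Set.Icc a b ×ˢ Set.Icc c e) ∪ S '' (Set.Icc a b ×ˢ Set.Icc f d)) :=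
  splitting_lemma_general ε U S L hL hLip hcond a b c d hab hcd hsub
end

section
/- Let μ > 0, δ ≥ 0, and let s₁ be a positive integer. Let K ⊆ ℝ be a nonempty compact set with m := min K and M := max K, and assume s₁·μ ≥ M − m and M − m ≥ μ/2 + 2δ. Let D := ⋃_{s ≥ s₁} K × (K + sμ) (union over integers s ≥ s₁) and let H : D → ℝ be continuous with |H(x₁,x₂) − (x₂ − x₁)/2| ≤ δ for all (x₁,x₂) ∈ D. Assume moreover that for every integer s ≥ s₁ the image H(K × (K + sμ)) is an interval. Then for every real number L ≥ inf H(K × (K + s₁μ)) there exist x₁, x₂ ∈ K and an integer s ≥ s₁ such that L = H(x₁, x₂ + sμ). -/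
/-!
The sets `J s := H(K × (K + sμ))` are intervals containing the points `H(M, m + sμ)` and
`H(m, M + sμ)`, which are within `δ` of `(m - M + sμ)/2` and `(M - m + sμ)/2`. The condition
`M - m ≥ μ/2 + 2δ` makes the low point of `J (s + 1)` lie below the high point of `J s`, so
consecutive intervals overlap, while the high points tend to infinity. Hence the union of the
`J s` is the whole half-line `[inf J s₁, ∞)`.
-/

open Set

theorem exists_mem_of_ordConnected_chain {α : Type*} [LinearOrder α] {J : ℕ → Set α}
    (hJ : ∀ n, (J n).OrdConnected) {q : ℕ → α} (hq : ∀ n, q n ∈ J n)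
    (hchain : ∀ n, ∃ p ∈ J (n + 1), p ≤ q n) {x L : α} (hx : x ∈ J 0) (hxL : x ≤ L) :
    ∀ n, L ≤ q n → ∃ k ≤ n, L ∈ J k := by
  intro n
  induction n with
  | zero => exact fun hLq => ⟨0, le_rfl, (hJ 0).out hx (hq 0) ⟨hxL, hLq⟩⟩
  | succ n ih =>
    intro hLq
    rcases le_or_gt L (q n) with hLn | hnL
    · obtain ⟨k, hk, hLk⟩ := ih hLn
      exact ⟨k, hk.trans n.le_succ, hLk⟩
    · obtain ⟨p, hp, hpq⟩ := hchain n
      exact ⟨n + 1, le_rfl, (hJ (n + 1)).out hp (hq (n + 1)) ⟨hpq.trans hnL.le, hLq⟩⟩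

theorem decomposition_perturbed_general (μ δ : ℝ) (hμ : 0 < μ)
    (s₁ : ℕ)
    (K : Set ℝ) (hne : K.Nonempty) (hcomp : IsCompact K)
    (h2 : μ / 2 + 2 * δ ≤ sSup K - sInf K)
    (H : ℝ × ℝ → ℝ)
    (hHcont : ContinuousOn H
      (⋃ s ∈ Set.Ici s₁, K ×ˢ ((fun x => x + (s : ℝ) * μ) '' K)))
    (hHδ : ∀ p ∈ (⋃ s ∈ Set.Ici s₁, K ×ˢ ((fun x => x + (s : ℝ) * μ) '' K)),
      |H p - (p.2 - p.1) / 2| ≤ δ)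
    (hint : ∀ s ∈ Set.Ici s₁,
      (H '' (K ×ˢ ((fun x => x + (s : ℝ) * μ) '' K))).OrdConnected)
    (L : ℝ) (hL : sInf (H '' (K ×ˢ ((fun x => x + (s₁ : ℝ) * μ) '' K))) ≤ L) :
    ∃ x₁ ∈ K, ∃ x₂ ∈ K, ∃ s : ℕ, s₁ ≤ s ∧ L = H (x₁, x₂ + (s : ℝ) * μ) := by
  set m := sInf K
  set M := sSup K
  have hmK : m ∈ K := hcomp.sInf_mem hne
  have hMK : M ∈ K := hcomp.sSup_mem hne
  set T : ℕ → Set (ℝ × ℝ) := fun s => K ×ˢ ((fun x => x + (s : ℝ) * μ) '' K)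
  have hmemT {a b : ℝ} (ha : a ∈ K) (hb : b ∈ K) (s : ℕ) : (a, b + s * μ) ∈ T s :=
    ⟨ha, b, hb, rfl⟩
  have hTD (n : ℕ) : T (s₁ + n) ⊆ ⋃ s ∈ Ici s₁, T s :=
    subset_biUnion_of_mem (u := T) (s₁.le_add_right n)
  have hH_near {a b : ℝ} (ha : a ∈ K) (hb : b ∈ K) (n : ℕ) :
      |H (a, b + (s₁ + n : ℕ) * μ) - (b + (s₁ + n : ℕ) * μ - a) / 2| ≤ δ :=
    hHδ _ (hTD n (hmemT ha hb (s₁ + n)))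
  set q : ℕ → ℝ := fun n => H (m, M + (s₁ + n : ℕ) * μ)
  have hq_ge (n : ℕ) : (M - m + (s₁ + n : ℕ) * μ) / 2 - δ ≤ q n := by
    linarith [(abs_le.mp (hH_near hmK hMK n)).1]
  have hchain (n : ℕ) : ∃ p ∈ H '' T (s₁ + (n + 1)), p ≤ q n := by
    refine ⟨_, mem_image_of_mem H (hmemT hMK hmK _), ?_⟩
    have hp_le := (abs_le.mp (hH_near hMK hmK (n + 1))).2
    have hq := hq_ge n
    push_cast at hp_le hq ⊢
    linarith
  obtain ⟨x, hx, hxL⟩ : ∃ x ∈ H '' T s₁, x ≤ L :=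
    ⟨_, ((hcomp.prod (hcomp.image (continuous_add_const _))).image_of_continuousOn
      (hHcont.mono (hTD 0))).sInf_mem ((hne.prod (hne.image _)).image H), hL⟩
  obtain ⟨n, hn⟩ := Archimedean.arch (2 * (L + δ) + m - M) hμ
  have hLq : L ≤ q n := by
    have hs₁μ : 0 ≤ (s₁ : ℝ) * μ := by positivity
    rw [nsmul_eq_mul] at hn
    linarith [hq_ge n, show ((s₁ + n : ℕ) : ℝ) * μ = s₁ * μ + n * μ by push_cast; ring]
  obtain ⟨k, -, ⟨y₁, y₂⟩, ⟨hy₁, x₂, hx₂, rfl⟩, rfl⟩ :=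
    exists_mem_of_ordConnected_chain (J := fun n => H '' T (s₁ + n))
      (fun n => hint _ (s₁.le_add_right n)) (fun n => mem_image_of_mem H (hmemT hmK hMK _))
      hchain hx hxL n hLq
  exact ⟨y₁, hy₁, x₂, hx₂, s₁ + k, s₁.le_add_right k, rfl⟩

/-- **Decomposition lemma for perturbed heights.** Let `K ⊆ ℝ` be nonempty compact with
`s₁μ ≥ max K − min K ≥ μ/2 + 2δ`, and let `H` be continuous on
`D = ⋃_{s ≥ s₁} K × (K + sμ)` with `|H(x₁,x₂) − (x₂−x₁)/2| ≤ δ` on `D` and with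
`H(K × (K + sμ))` an interval for every `s ≥ s₁`. Then every real
`L ≥ inf H(K × (K + s₁μ))` can be written as `L = H(x₁, x₂ + sμ)` with `x₁, x₂ ∈ K`
and `s ≥ s₁` an integer. -/
theorem decomposition_perturbed (μ δ : ℝ) (hμ : 0 < μ) (hδ : 0 ≤ δ)
    (s₁ : ℕ) (hs₁ : 0 < s₁)
    (K : Set ℝ) (hne : K.Nonempty) (hcomp : IsCompact K)
    (h1 : sSup K - sInf K ≤ (s₁ : ℝ) * μ)
    (h2 : μ / 2 + 2 * δ ≤ sSup K - sInf K)
    (H : ℝ × ℝ → ℝ)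
    (hHcont : ContinuousOn H
      (⋃ s ∈ Set.Ici s₁, K ×ˢ ((fun x => x + (s : ℝ) * μ) '' K)))
    (hHδ : ∀ p ∈ (⋃ s ∈ Set.Ici s₁, K ×ˢ ((fun x => x + (s : ℝ) * μ) '' K)),
      |H p - (p.2 - p.1) / 2| ≤ δ)
    (hint : ∀ s ∈ Set.Ici s₁,
      (H '' (K ×ˢ ((fun x => x + (s : ℝ) * μ) '' K))).OrdConnected)
    (L : ℝ) (hL : sInf (H '' (K ×ˢ ((fun x => x + (s₁ : ℝ) * μ) '' K))) ≤ L) :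
    ∃ x₁ ∈ K, ∃ x₂ ∈ K, ∃ s : ℕ, s₁ ≤ s ∧ L = H (x₁, x₂ + (s : ℝ) * μ) :=
  decomposition_perturbed_general μ δ hμ s₁ K hne hcomp h2 H hHcont hHδ hint L hL
end
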